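/- Let d = 2 (the single-qubit case, n = 1), let {ψ_k}_{k=1}^4 be a single-qubit SIC-POVM, let Γ = Σ_{k=1}^4 (ψ_k ψ_k†)^T ⊗ (ψ_k ψ_k†) (a 4×4 matrix), and let φ = (1/√2)(e_1 ⊗ e_1 + e_2 ⊗ e_2) ∈ ℂ⁴. Then for every positive semidefinite 4×4 complex matrix χ satisfying the trace-preservation condition Tr₂(χ) = I/2 (partial trace over the second tensor factor equals half the 2×2 identity), setting F = ⟨φ, χ φ⟩ and F₀ = (1/2)·Tr(χ Γ), we have F = 1 − (3/2)(1 − F₀), i.e., F = (3F₀ − 1)/2. Thus for a single qubit the process fidelity is uniquely determined by the 0-fidelity and equals the lower bound of the main theorem. -/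

import Mathlib

open Matrix Polynomial
open scoped Kronecker ComplexOrder Classical

noncomputable section

/-- Hermitian inner product on `m → ℂ`, conjugate-linear in the first argument. -/
def cinner {m : Type*} [Fintype m] (v w : m → ℂ) : ℂ :=
  ∑ a, (starRingEnd ℂ) (v a) * w a

/-- A single-qubit SIC-POVM: four unit vectors in ℂ² with pairwise squared overlaps 1/3. -/
def IsSICPOVM (ψ : Fin 4 → Fin 2 → ℂ) : Prop :=
  (∀ k, cinner (ψ k) (ψ k) = 1) ∧
  ∀ k k', k ≠ k' → ‖cinner (ψ k) (ψ k')‖ ^ 2 = 1 / 3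

/-- Tensor product state `ψ_k = ψ_{1,k_1} ⊗ ⋯ ⊗ ψ_{n,k_n}` on `ℂ^(2^n)`,
    whose coordinates are indexed by `Fin n → Fin 2`. -/
def prodState {n : ℕ} (ψ : Fin n → Fin 4 → Fin 2 → ℂ) (k : Fin n → Fin 4) :
    (Fin n → Fin 2) → ℂ :=
  fun x => ∏ i, ψ i (k i) (x i)

/-- The rank-one projector `ψψ†` onto a vector. -/
def proj {m : Type*} (v : m → ℂ) : Matrix m m ℂ :=
  Matrix.vecMulVec v (star v)

/-- The matrix `Γ = Σ_k (ψ_k ψ_k†)ᵀ ⊗ (ψ_k ψ_k†)`. -/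
def Gam {n : ℕ} (ψ : Fin n → Fin 4 → Fin 2 → ℂ) :
    Matrix ((Fin n → Fin 2) × (Fin n → Fin 2)) ((Fin n → Fin 2) × (Fin n → Fin 2)) ℂ :=
  ∑ k : Fin n → Fin 4, (proj (prodState ψ k))ᵀ ⊗ₖ proj (prodState ψ k)

/-- The maximally entangled vector `φ = (1/√d) Σ_x e_x ⊗ e_x`, `d = 2^n`. -/
def maxEnt (n : ℕ) : (Fin n → Fin 2) × (Fin n → Fin 2) → ℂ :=
  fun p => if p.1 = p.2 then (((Real.sqrt (2 ^ n))⁻¹ : ℝ) : ℂ) else 0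

/-!
A SIC-POVM `ψ_1, …, ψ_{d²}` in `ℂ^d` is a projective 2-design; in Choi form this says
`Γ = Σ_k (ψ_k ψ_k†)ᵀ ⊗ ψ_k ψ_k† = d/(d+1) · (1 + d · φφ†)` with `φ` maximally entangled.
Both sides are Hermitian, so they agree once the trace of the square of their difference
vanishes, and that trace only involves `tr Γ`, `tr Γ²` and `tr(Γ φφ†)`, which are fixed by the
overlaps `|⟨ψ_k, ψ_j⟩|² = 1/(d+1)`. Pairing with a unit-trace `χ` then gives
`F₀ = tr(χΓ)/d = (dF + 1)/(d+1)`.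
-/

theorem sum_sum_ite_eq {ι R : Type*} [Fintype ι] [DecidableEq ι] [CommRing R] (a b : R) :
    ∑ k : ι, ∑ j : ι, (if k = j then a else b) =
      Fintype.card ι * (a - b) + Fintype.card ι ^ 2 * b := by
  have hsplit : ∀ k j : ι, (if k = j then a else b) = b + if k = j then a - b else 0 := by
    intro k j
    split_ifs <;> ring
  simp [hsplit, Finset.sum_add_distrib]
  ring

theorem Matrix.IsHermitian.eq_of_trace_mul_eq {n R : Type*} [Fintype n] [CommRing R]
    [PartialOrder R] [StarRing R] [StarOrderedRing R] [NoZeroDivisors R] {X Y : Matrix n n R}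
    (hX : X.IsHermitian) (hY : Y.IsHermitian) (hXX : (X * X).trace = (X * Y).trace)
    (hYY : (Y * Y).trace = (X * Y).trace) : X = Y := by
  rw [← sub_eq_zero, ← trace_conjTranspose_mul_self_eq_zero_iff, (hX.sub hY).eq, sub_mul,
    mul_sub, mul_sub, trace_sub, trace_sub, trace_sub, trace_mul_comm Y X, hXX, hYY]
  ring

theorem Matrix.IsHermitian.transpose_kronecker {m n R : Type*} [CommMagma R] [StarMul R]
    {A : Matrix m m R} {B : Matrix n n R} (hA : A.IsHermitian) (hB : B.IsHermitian) :
    (Aᵀ ⊗ₖ B).IsHermitian := by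
  rw [IsHermitian, conjTranspose_kronecker, hA.transpose.eq, hB.eq]

theorem trace_transpose_kronecker_mul {m n R : Type*} [Fintype m] [Fintype n] [CommSemiring R]
    (A C : Matrix m m R) (B D : Matrix n n R) :
    ((Aᵀ ⊗ₖ B) * (Cᵀ ⊗ₖ D)).trace = (A * C).trace * (B * D).trace := by
  rw [← mul_kronecker_mul, trace_kronecker, ← transpose_mul, trace_transpose, trace_mul_comm]

section Proj

variable {m : Type*} [Fintype m]

theorem cinner_eq_dotProduct (v w : m → ℂ) : cinner v w = star v ⬝ᵥ w := by
  simp [cinner, dotProduct]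

theorem trace_mul_proj (M : Matrix m m ℂ) (v : m → ℂ) :
    (M * proj v).trace = cinner v (M *ᵥ v) := by
  rw [proj, mul_vecMulVec, trace_vecMulVec, dotProduct_comm, cinner_eq_dotProduct]

theorem trace_proj (v : m → ℂ) : (proj v).trace = cinner v v := by
  rw [proj, trace_vecMulVec, dotProduct_comm, cinner_eq_dotProduct]

theorem trace_proj_mul_proj (v w : m → ℂ) :
    (proj v * proj w).trace = ((‖cinner v w‖ ^ 2 : ℝ) : ℂ) := by
  rw [Complex.ofReal_pow, proj, proj, vecMulVec_mul_vecMulVec, trace_vecMulVec, dotProduct_smul,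
    smul_eq_mul, dotProduct_comm v, ← cinner_eq_dotProduct, ← Complex.mul_conj',
    cinner_eq_dotProduct, star_dotProduct w v, starRingEnd_apply, mul_comm]

omit [Fintype m] in
theorem isHermitian_proj (v : m → ℂ) : (proj v).IsHermitian := by
  simp [IsHermitian, proj, conjTranspose_vecMulVec]

end Proj

section MaxEntangled

variable (m : Type*) [Fintype m] [DecidableEq m]

def maxEntangled : m × m → ℂ :=
  fun p => if p.1 = p.2 then ((Real.sqrt (Fintype.card m))⁻¹ : ℝ) else 0

variable {m} in
theorem trace_kronecker_mul_proj_maxEntangled (A B : Matrix m m ℂ) :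
    ((Aᵀ ⊗ₖ B) * proj (maxEntangled m)).trace = (Fintype.card m : ℂ)⁻¹ * (A * B).trace := by
  have hsq : ((Real.sqrt (Fintype.card m))⁻¹ : ℂ) * ((Real.sqrt (Fintype.card m))⁻¹ : ℂ) =
      (Fintype.card m : ℂ)⁻¹ := by
    rw [← mul_inv, ← Complex.ofReal_mul, Real.mul_self_sqrt (Nat.cast_nonneg _)]
    push_cast; rfl
  rw [trace_mul_proj]
  simp [cinner, maxEntangled, mulVec, dotProduct, Fintype.sum_prod_type, trace, Matrix.mul_apply,
    Finset.mul_sum, apply_ite, ite_mul]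
  rw [Finset.sum_comm]
  refine Finset.sum_congr rfl fun x _ => Finset.sum_congr rfl fun y _ => ?_
  linear_combination (A x y * B y x) * hsq

variable [Nonempty m]

theorem trace_proj_maxEntangled : (proj (maxEntangled m)).trace = 1 := by
  simpa [transpose_one, one_kronecker_one, Fintype.card_ne_zero] using
    trace_kronecker_mul_proj_maxEntangled (1 : Matrix m m ℂ) 1

theorem trace_proj_maxEntangled_mul_self :
    (proj (maxEntangled m) * proj (maxEntangled m)).trace = 1 := by
  rw [trace_proj_mul_proj, ← trace_proj, trace_proj_maxEntangled]
  simp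

end MaxEntangled

structure IsSIC {ι m : Type*} [Fintype ι] [Fintype m] (ψ : ι → m → ℂ) : Prop where
  card_eq : Fintype.card ι = Fintype.card m ^ 2
  cinner_self : ∀ k, cinner (ψ k) (ψ k) = 1
  norm_cinner_sq : ∀ k j, k ≠ j → ‖cinner (ψ k) (ψ j)‖ ^ 2 = 1 / ((Fintype.card m : ℝ) + 1)

def gammaOp {ι m : Type*} [Fintype ι] (ψ : ι → m → ℂ) : Matrix (m × m) (m × m) ℂ :=
  ∑ k, (proj (ψ k))ᵀ ⊗ₖ proj (ψ k)

theorem isHermitian_gammaOp {ι m : Type*} [Fintype ι] (ψ : ι → m → ℂ) :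
    (gammaOp ψ).IsHermitian := by
  rw [IsHermitian, gammaOp, conjTranspose_sum]
  exact Finset.sum_congr rfl fun k _ =>
    ((isHermitian_proj _).transpose_kronecker (isHermitian_proj _)).eq

namespace IsSIC

variable {ι m : Type*} [Fintype ι] [Fintype m] {ψ : ι → m → ℂ}

theorem trace_proj_mul_proj [DecidableEq ι] (h : IsSIC ψ) (k j : ι) :
    (proj (ψ k) * proj (ψ j)).trace = if k = j then 1 else 1 / ((Fintype.card m : ℂ) + 1) := by
  rw [_root_.trace_proj_mul_proj]
  split_ifs with hkj
  · simp [hkj, h.cinner_self]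
  · rw [h.norm_cinner_sq k j hkj]
    push_cast; rfl

theorem trace_gammaOp (h : IsSIC ψ) : (gammaOp ψ).trace = (Fintype.card m : ℂ) ^ 2 := by
  simp [gammaOp, trace_sum, trace_kronecker, trace_proj, h.cinner_self, h.card_eq]

theorem trace_gammaOp_mul_self [DecidableEq ι] (h : IsSIC ψ) :
    (gammaOp ψ * gammaOp ψ).trace = 2 * (Fintype.card m : ℂ) ^ 3 / (Fintype.card m + 1) := by
  have hd : (Fintype.card m : ℂ) + 1 ≠ 0 := by positivity
  rw [gammaOp, Finset.sum_mul_sum]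
  simp only [trace_sum, trace_transpose_kronecker_mul, h.trace_proj_mul_proj, ← sq, ite_pow,
    one_pow, sum_sum_ite_eq, h.card_eq]
  push_cast
  field_simp
  ring

theorem trace_gammaOp_mul_proj_maxEntangled [DecidableEq m] (h : IsSIC ψ) :
    (gammaOp ψ * proj (maxEntangled m)).trace = Fintype.card m := by
  simp [gammaOp, Finset.sum_mul, trace_sum, trace_kronecker_mul_proj_maxEntangled,
    _root_.trace_proj_mul_proj, h.cinner_self, h.card_eq]
  rw [sq, mul_self_mul_inv]

variable [DecidableEq m] [Nonempty m]

theorem gammaOp_eq [DecidableEq ι] (h : IsSIC ψ) :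
    gammaOp ψ = ((Fintype.card m : ℂ) / (Fintype.card m + 1)) •
      (1 + (Fintype.card m : ℂ) • proj (maxEntangled m)) := by
  have hd : (Fintype.card m : ℂ) + 1 ≠ 0 := by positivity
  have hA : (((Fintype.card m : ℂ) / (Fintype.card m + 1)) •
      (1 + (Fintype.card m : ℂ) • proj (maxEntangled m))).IsHermitian :=
    (isHermitian_one.add ((isHermitian_proj _).smul (by simp [IsSelfAdjoint]))).smul
      (by simp [IsSelfAdjoint])
  refine (isHermitian_gammaOp ψ).eq_of_trace_mul_eq hA ?_ ?_ <;>
  simp only [Matrix.mul_smul, Matrix.smul_mul, Matrix.mul_add, Matrix.add_mul, Matrix.mul_one,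
    Matrix.one_mul, trace_smul, trace_add, trace_one, smul_eq_mul, h.trace_gammaOp,
    h.trace_gammaOp_mul_self, h.trace_gammaOp_mul_proj_maxEntangled, trace_proj_maxEntangled,
    trace_proj_maxEntangled_mul_self, Fintype.card_prod] <;>
  push_cast <;>
  field_simp <;>
  ring

theorem inv_card_mul_trace_mul_gammaOp (h : IsSIC ψ) {χ : Matrix (m × m) (m × m) ℂ}
    (hχ : χ.trace = 1) :
    (Fintype.card m : ℂ)⁻¹ * (χ * gammaOp ψ).trace =
      (Fintype.card m * cinner (maxEntangled m) (χ *ᵥ maxEntangled m) + 1) /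
        (Fintype.card m + 1) := by
  have hd : (Fintype.card m : ℂ) + 1 ≠ 0 := by positivity
  rw [h.gammaOp_eq, Matrix.mul_smul, Matrix.mul_add, Matrix.mul_smul, Matrix.mul_one, trace_smul,
    trace_add, trace_smul, trace_mul_proj, hχ, smul_eq_mul, smul_eq_mul]
  field_simp
  ring

end IsSIC

def partialTraceRight {m n R : Type*} [Fintype n] [AddCommMonoid R]
    (χ : Matrix (m × n) (m × n) R) : Matrix m m R :=
  Matrix.of fun x y => ∑ a, χ (x, a) (y, a)

theorem trace_partialTraceRight {m n R : Type*} [Fintype m] [Fintype n] [AddCommMonoid R]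
    (χ : Matrix (m × n) (m × n) R) : (partialTraceRight χ).trace = χ.trace := by
  simp [partialTraceRight, trace, Fintype.sum_prod_type]

theorem IsSICPOVM.isSIC {ψ : Fin 4 → Fin 2 → ℂ} (hψ : IsSICPOVM ψ) : IsSIC ψ where
  card_eq := rfl
  cinner_self := hψ.1
  norm_cinner_sq k j hkj := by
    rw [hψ.2 k j hkj]
    norm_num

theorem maxEntangled_fin_two :
    maxEntangled (Fin 2) = fun p => if p.1 = p.2 then (((Real.sqrt 2)⁻¹ : ℝ) : ℂ) else 0 := by
  ext p
  simp [maxEntangled]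

theorem single_qubit_fidelity_eq_general (ψ : Fin 4 → Fin 2 → ℂ) (hψ : IsSICPOVM ψ)
    (χ : Matrix (Fin 2 × Fin 2) (Fin 2 × Fin 2) ℂ)
    (hTP : (Matrix.of fun x y : Fin 2 => ∑ a : Fin 2, χ (x, a) (y, a)) =
      ((2 : ℂ))⁻¹ • (1 : Matrix (Fin 2) (Fin 2) ℂ)) :
    cinner (fun p : Fin 2 × Fin 2 => if p.1 = p.2 then (((Real.sqrt 2)⁻¹ : ℝ) : ℂ) else 0)
        (χ.mulVec (fun p : Fin 2 × Fin 2 =>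
          if p.1 = p.2 then (((Real.sqrt 2)⁻¹ : ℝ) : ℂ) else 0))
      = 1 - 3 / 2 * (1 - (2 : ℂ)⁻¹ *
          (χ * ∑ k : Fin 4, (proj (ψ k))ᵀ ⊗ₖ proj (ψ k)).trace) := by
  have htrace : χ.trace = 1 := by
    rw [← trace_partialTraceRight, partialTraceRight, hTP, trace_smul, trace_one]
    norm_num
  have hfid := hψ.isSIC.inv_card_mul_trace_mul_gammaOp htrace
  rw [gammaOp, maxEntangled_fin_two] at hfid
  simp only [Fintype.card_fin, Nat.cast_ofNat] at hfid
  rw [hfid]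
  ring

/-- Single-qubit case: for any Choi matrix `χ` of a CPTP map on one qubit,
    the process fidelity is uniquely determined by the 0-fidelity:
    `F = 1 - (3/2)(1 - F₀)`. -/
theorem single_qubit_fidelity_eq (ψ : Fin 4 → Fin 2 → ℂ) (hψ : IsSICPOVM ψ)
    (χ : Matrix (Fin 2 × Fin 2) (Fin 2 × Fin 2) ℂ)
    (hχ : χ.PosSemidef)
    (hTP : (Matrix.of fun x y : Fin 2 => ∑ a : Fin 2, χ (x, a) (y, a)) =
      ((2 : ℂ))⁻¹ • (1 : Matrix (Fin 2) (Fin 2) ℂ)) :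
    cinner (fun p : Fin 2 × Fin 2 => if p.1 = p.2 then (((Real.sqrt 2)⁻¹ : ℝ) : ℂ) else 0)
        (χ.mulVec (fun p : Fin 2 × Fin 2 =>
          if p.1 = p.2 then (((Real.sqrt 2)⁻¹ : ℝ) : ℂ) else 0))
      = 1 - 3 / 2 * (1 - (2 : ℂ)⁻¹ *
          (χ * ∑ k : Fin 4, (proj (ψ k))ᵀ ⊗ₖ proj (ψ k)).trace) :=
  single_qubit_fidelity_eq_general ψ hψ χ hTP
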